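/- arXiv:2106.03440 — 4 statements merged into one kernel-verified Lean document; each statement's English description precedes it below -/
import Mathlib

section
/- Let R be a commutative ring and n ≥ 1. For each 1 ≤ k' ≤ k ≤ n, let Φ(k,k') ∈ R[x_1,...,x_n] be the sum of all monomials of degree k in the variables x_1,...,x_{n-k'+1}. Then the ideal generated by the complete homogeneous symmetric polynomials h_1,...,h_n in n variables equals the ideal generated by Φ(1,1), Φ(2,2), ..., Φ(n,n). -/
/-! Splitting off the last variable gives `Φ(k, k') = Φ(k, k'+1) + x_{n-k'+1} Φ(k-1, k')`.
By induction on `k`, `Φ(k-1, k')` lies in `(h_1, …, h_{k-1})` whenever `k' ≤ k - 1`, so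
`Φ(k, k') ≡ h_k` modulo `(h_1, …, h_{k-1})` for all `k' ≤ k`. The two generating families are
therefore related by a unitriangular change of generators, and span the same ideal. -/

/-- Sum of all monomials of degree `a` in the first `b` variables `x_1, …, x_b`
of `R[x_1, …, x_n]`. -/
noncomputable def Hp (R : Type*) [CommRing R] (n a b : ℕ) : MvPolynomial (Fin n) R :=
  ∑ m ∈ (Finset.univ.filter fun i : Fin n => (i : ℕ) < b).sym a,
    ((m : Multiset (Fin n)).map MvPolynomial.X).prod

/-- `Φ(k, k')`: the sum of all monomials of degree `k` in the variables
`x_1, …, x_{n-k'+1}`. In particular `h_k = Φ(k, 1)`. -/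
noncomputable def Phi (R : Type*) [CommRing R] (n k k' : ℕ) : MvPolynomial (Fin n) R :=
  Hp R n k (n - k' + 1)

namespace Finset

variable {α S : Type*} [DecidableEq α] [CommSemiring S]

def completeHomogeneous (s : Finset α) (f : α → S) (a : ℕ) : S :=
  ∑ m ∈ s.sym a, ((m : Multiset α).map f).prod

variable {s : Finset α} {x : α}

theorem completeHomogeneous_insert (hx : x ∉ s) (f : α → S) (a : ℕ) :
    (insert x s).completeHomogeneous f a =
      ∑ i ∈ range (a + 1), f x ^ i * s.completeHomogeneous f (a - i) := by
  have hterm (p : Σ i : Fin (a + 1), s.sym (a - i)) :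
      ((((symInsertEquiv hx).symm p : Sym α a) : Multiset α).map f).prod
        = f x ^ (p.1 : ℕ) * ((p.2.1 : Multiset α).map f).prod := by
    rw [symInsertEquiv_symm_apply_coe, Sym.coe_fill, Multiset.map_add, Multiset.prod_add,
      Sym.coe_replicate, Multiset.map_replicate, Multiset.prod_replicate, mul_comm]
  rw [completeHomogeneous, ← sum_coe_sort, ← (symInsertEquiv hx).symm.sum_comp,
    ← univ_sigma_univ, sum_sigma, ← Fin.sum_univ_eq_sum_range]
  refine Fintype.sum_congr _ _ fun i => ?_
  simp only [hterm, ← mul_sum, completeHomogeneous]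
  rw [← sum_coe_sort (s.sym _)]

theorem completeHomogeneous_insert_succ (hx : x ∉ s) (f : α → S) (a : ℕ) :
    (insert x s).completeHomogeneous f (a + 1) =
      s.completeHomogeneous f (a + 1) + f x * (insert x s).completeHomogeneous f a := by
  rw [completeHomogeneous_insert hx, completeHomogeneous_insert hx, sum_range_succ', mul_sum,
    add_comm]
  simp only [pow_zero, one_mul, Nat.sub_zero, pow_succ', mul_assoc, Nat.add_sub_add_right]

end Finset

open Finset MvPolynomial

section

variable {R : Type*} [CommRing R] {n : ℕ}

theorem Hp_eq_completeHomogeneous (a b : ℕ) :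
    Hp R n a b = (univ.filter fun i : Fin n => (i : ℕ) < b).completeHomogeneous X a :=
  rfl

theorem Hp_succ_succ {b : ℕ} (hb : b < n) (a : ℕ) :
    Hp R n (a + 1) (b + 1) = Hp R n (a + 1) b + X ⟨b, hb⟩ * Hp R n a (b + 1) := by
  have hinsert : (univ.filter fun i : Fin n => (i : ℕ) < b + 1) =
      insert ⟨b, hb⟩ (univ.filter fun i : Fin n => (i : ℕ) < b) := by
    ext i
    simp [Fin.ext_iff, le_iff_eq_or_lt]
  simp only [Hp_eq_completeHomogeneous, hinsert]
  exact completeHomogeneous_insert_succ (by simp) _ _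

-- `Fin n` is 0-indexed: `X ⟨n - (d + 1), _⟩` is the paper's `x_{n-d}`.
theorem Phi_succ {d : ℕ} (hd : d + 1 < n) (a : ℕ) :
    Phi R n (a + 1) (d + 1) =
      Phi R n (a + 1) (d + 2) + X ⟨n - (d + 1), by omega⟩ * Phi R n a (d + 1) := by
  have hb : n - (d + 2) + 1 = n - (d + 1) := by omega
  rw [Phi, Phi, Phi, hb]
  exact Hp_succ_succ _ a

variable (R n) in
noncomputable def hIdeal (m : ℕ) : Ideal (MvPolynomial (Fin n) R) :=
  Ideal.span { p : MvPolynomial (Fin n) R | ∃ l, 1 ≤ l ∧ l ≤ m ∧ p = Phi R n l 1 }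

theorem hIdeal_mono {m m' : ℕ} (h : m ≤ m') : hIdeal R n m ≤ hIdeal R n m' :=
  Ideal.span_mono fun _ ⟨l, hl, hlm, hp⟩ => ⟨l, hl, hlm.trans h, hp⟩

theorem Phi_one_mem_hIdeal {l m : ℕ} (hl : 1 ≤ l) (hlm : l ≤ m) : Phi R n l 1 ∈ hIdeal R n m :=
  Ideal.subset_span ⟨l, hl, hlm, rfl⟩

theorem Phi_mem_hIdeal_succ {j k' : ℕ}
    (h : Phi R n (j + 1) k' - Phi R n (j + 1) 1 ∈ hIdeal R n j) :
    Phi R n (j + 1) k' ∈ hIdeal R n (j + 1) := by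
  rw [← sub_add_cancel (Phi R n (j + 1) k') (Phi R n (j + 1) 1)]
  exact add_mem (hIdeal_mono j.le_succ h) (Phi_one_mem_hIdeal le_add_self le_rfl)

theorem Phi_sub_Phi_one_mem_hIdeal {j d : ℕ} (hdj : d ≤ j) (hjn : j < n) :
    Phi R n (j + 1) (d + 1) - Phi R n (j + 1) 1 ∈ hIdeal R n j := by
  induction j generalizing d with
  | zero => simp [Nat.le_zero.mp hdj]
  | succ j ihj =>
    induction d with
    | zero => simp
    | succ d ihd =>
      have hrec : Phi R n (j + 2) (d + 2) - Phi R n (j + 2) 1 =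
          Phi R n (j + 2) (d + 1) - Phi R n (j + 2) 1 -
            X ⟨n - (d + 1), by omega⟩ * Phi R n (j + 1) (d + 1) := by
        rw [Phi_succ (d := d) (by omega)]
        ring
      rw [hrec]
      exact sub_mem (ihd (by omega)) (Ideal.mul_mem_left _ _
        (Phi_mem_hIdeal_succ (ihj (d := d) (by omega) (by omega))))

theorem hIdeal_le_span_Phi_diag {m : ℕ} (hmn : m ≤ n) :
    hIdeal R n m ≤ Ideal.span { p | ∃ k, 1 ≤ k ∧ k ≤ n ∧ p = Phi R n k k } := by
  induction m with
  | zero =>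
    rw [hIdeal, Ideal.span_le]
    rintro _ ⟨l, hl, hl0, rfl⟩
    omega
  | succ m ih =>
    rw [hIdeal, Ideal.span_le]
    rintro _ ⟨l, hl, hlm, rfl⟩
    obtain hlm | rfl := hlm.lt_or_eq
    · exact ih (by omega) (Phi_one_mem_hIdeal hl (by omega))
    · rw [← sub_sub_cancel (Phi R n (m + 1) (m + 1)) (Phi R n (m + 1) 1)]
      exact sub_mem (Ideal.subset_span ⟨m + 1, hl, hmn, rfl⟩)
        (ih (by omega) (Phi_sub_Phi_one_mem_hIdeal le_rfl hmn))

end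

theorem stmt4_general (R : Type*) [CommRing R] (n : ℕ) :
    Ideal.span { p : MvPolynomial (Fin n) R | ∃ l, 1 ≤ l ∧ l ≤ n ∧ p = Phi R n l 1 } =
      Ideal.span { p : MvPolynomial (Fin n) R | ∃ k, 1 ≤ k ∧ k ≤ n ∧ p = Phi R n k k } := by
  refine le_antisymm (hIdeal_le_span_Phi_diag le_rfl) (Ideal.span_le.mpr ?_)
  rintro _ ⟨k, hk, hkn, rfl⟩
  obtain ⟨j, rfl⟩ := Nat.exists_eq_add_of_le' hk
  exact hIdeal_mono hkn (Phi_mem_hIdeal_succ (Phi_sub_Phi_one_mem_hIdeal le_rfl hkn))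

theorem stmt4 (R : Type*) [CommRing R] (n : ℕ) (hn : 1 ≤ n) :
    Ideal.span { p : MvPolynomial (Fin n) R | ∃ l, 1 ≤ l ∧ l ≤ n ∧ p = Phi R n l 1 } =
      Ideal.span { p : MvPolynomial (Fin n) R | ∃ k, 1 ≤ k ∧ k ≤ n ∧ p = Phi R n k k } :=
  stmt4_general R n
end

section
/- For n ≥ 1, 1 ≤ i ≤ n, and j ≥ 1, define γ̃_i^{(j)} = Σ_{c_1+...+c_n = j} (c_i+1) γ_1^{c_1}···γ_n^{c_n}. Then in the quotient ring Z[γ_1,...,γ_n]/⟨h_1,...,h_n, h_{n+1}⟩ (quotient by complete homogeneous symmetric polynomials of degrees 1 through n+1), the image of γ̃_i^{(j)} equals the image of γ_i^{j-1}·(γ_1+...+γ_n+γ_i), i.e. γ̃_i^{(j)} ≡ γ_i^{j-1}·γ̃_i^{(1)} modulo the ideal generated by complete homogeneous symmetric polynomials of positive degree. -/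
/-- The complete homogeneous symmetric polynomial of degree `a` in
`γ_1, …, γ_n` (all `n` variables). -/
noncomputable def hsym (n a : ℕ) : MvPolynomial (Fin n) ℤ :=
  ∑ m ∈ (Finset.univ : Finset (Fin n)).sym a,
    ((m : Multiset (Fin n)).map MvPolynomial.X).prod

/-- `γ̃_i^{(j)} = Σ_{c_1+⋯+c_n = j} (c_i + 1) γ_1^{c_1} ⋯ γ_n^{c_n}`. -/
noncomputable def gtldPow (n : ℕ) (i : Fin n) (j : ℕ) : MvPolynomial (Fin n) ℤ :=
  ∑ c ∈ Finset.Nat.antidiagonalTuple n j,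
    MvPolynomial.C ((c i : ℤ) + 1) * ∏ t : Fin n, MvPolynomial.X t ^ c t

/-!
With `H(T) = ∑ h_m T^m = ∏_t (1 - γ_t T)⁻¹`, the identity `∏_t (1 - γ_t T) · H(T) = 1`, whose
polynomial factor has degree `n` and constant term `1`, expresses `h_m` for `m > n` through
`h_{m-1}, …, h_{m-n}`; so every `h_m` with `m ≥ 1` lies in the ideal. The weight `c_i + 1` is the
coefficient of `(1 - γ_i T)⁻²`, so `∑_j γ̃_i^{(j)} T^j = (1 - γ_i T)⁻¹ H(T)`, i.e.
`γ̃_i^{(j)} = ∑_{a+b=j} γ_i^a h_b ≡ γ_i^j`, and likewise `γ_i^{j-1} (h_1 + γ_i) ≡ γ_i^j`.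
-/

open Finset

namespace PowerSeries

section CommSemiring

variable {R : Type*} [CommSemiring R]

noncomputable def geomSeries (a : R) : PowerSeries R := mk (a ^ ·)

theorem geomSeries_eq_rescale (a : R) : geomSeries a = rescale a (mk 1) := by
  simp [geomSeries, rescale_mk]

@[simp]
theorem coeff_geomSeries (a : R) (n : ℕ) : coeff n (geomSeries a) = a ^ n := coeff_mk _ _

end CommSemiring

section CommRing

variable {R : Type*} [CommRing R]

theorem coeff_geomSeries_sq (a : R) (n : ℕ) : coeff n (geomSeries a ^ 2) = (n + 1) * a ^ n := by
  rw [geomSeries_eq_rescale, ← map_pow, coeff_rescale, mk_one_pow_eq_mk_choose_add R 1, coeff_mk]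
  simp [add_comm, mul_comm]

theorem one_sub_C_mul_X_mul_geomSeries (a : R) : (1 - C a * X) * geomSeries a = 1 := by
  have : 1 - C a * X = rescale a (1 - X) := by simp [map_sub]
  rw [this, geomSeries_eq_rescale, ← map_mul, mul_comm, mk_one_mul_one_sub_eq_one, map_one]

end CommRing

theorem coeff_prod_univ {σ S : Type*} [Fintype σ] [DecidableEq σ] [CommSemiring S]
    (φ : σ → PowerSeries S) (m : ℕ) :
    coeff m (∏ t, φ t) = ∑ c ∈ piAntidiag univ m, ∏ t, coeff (c t) (φ t) := by
  rw [coeff_prod, finsuppAntidiag, sum_map]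
  exact sum_attach (piAntidiag univ m) fun c => ∏ t, coeff (c t) (φ t)

end PowerSeries

namespace MvPolynomial

open PowerSeries (geomSeries)

variable {σ : Type*} [Fintype σ] [DecidableEq σ]

section CommSemiring

variable {R : Type*} [CommSemiring R]

theorem hsymm_eq_sum_piAntidiag (m : ℕ) :
    hsymm σ R m = ∑ c ∈ piAntidiag univ m, ∏ t, X t ^ c t := by
  rw [← map_sym_eq_piAntidiag, sum_map, hsymm, ← sym_univ]
  refine sum_congr rfl fun s _ => ?_
  rw [prod_multiset_map_count]
  exact prod_subset (subset_univ _) fun t _ ht => by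
    rw [Multiset.count_eq_zero_of_notMem (by simpa using ht), pow_zero]

theorem coeff_prod_geomSeries_X (m : ℕ) :
    PowerSeries.coeff m (∏ t, geomSeries (X t)) = hsymm σ R m := by
  simp [PowerSeries.coeff_prod_univ, hsymm_eq_sum_piAntidiag]

end CommSemiring

variable {R : Type*} [CommRing R]

variable (σ R) in
noncomputable def prodOneSubXT : Polynomial (MvPolynomial σ R) :=
  ∏ t, (1 - Polynomial.C (X t) * Polynomial.X)

omit [DecidableEq σ] in
theorem natDegree_prodOneSubXT_le : (prodOneSubXT σ R).natDegree ≤ Fintype.card σ := by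
  rw [prodOneSubXT]
  calc _ ≤ ∑ t : σ, (1 - Polynomial.C (X t : MvPolynomial σ R) * Polynomial.X).natDegree :=
          Polynomial.natDegree_prod_le _ _
    _ ≤ ∑ _t : σ, 1 := by
          gcongr with t
          compute_degree
    _ = Fintype.card σ := by simp

omit [DecidableEq σ] in
theorem coeff_prodOneSubXT_zero : (prodOneSubXT σ R).coeff 0 = 1 := by
  simp [prodOneSubXT, Polynomial.coeff_zero_eq_eval_zero, Polynomial.eval_prod]

omit [DecidableEq σ] in
theorem prodOneSubXT_mul_prod_geomSeries_X :
    (prodOneSubXT σ R : PowerSeries (MvPolynomial σ R)) * ∏ t, geomSeries (X t) = 1 := by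
  rw [prodOneSubXT, ← Polynomial.coeToPowerSeries.ringHom_apply, map_prod, ← prod_mul_distrib]
  simp [Polynomial.coeToPowerSeries.ringHom_apply, PowerSeries.one_sub_C_mul_X_mul_geomSeries]

theorem sum_antidiagonal_coeff_prodOneSubXT_mul_hsymm {m : ℕ} (hm : m ≠ 0) :
    ∑ p ∈ antidiagonal m, (prodOneSubXT σ R).coeff p.1 * hsymm σ R p.2 = 0 := by
  have hcoeff :=
    congrArg (PowerSeries.coeff m) (prodOneSubXT_mul_prod_geomSeries_X (σ := σ) (R := R))
  rw [PowerSeries.coeff_mul, PowerSeries.coeff_one, if_neg hm] at hcoeff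
  simpa [Polynomial.coeff_coe, coeff_prod_geomSeries_X] using hcoeff

theorem hsymm_mem_of_forall_le_card (I : Ideal (MvPolynomial σ R))
    (hI : ∀ k, 0 < k → k ≤ Fintype.card σ → hsymm σ R k ∈ I) {m : ℕ} (hm : 0 < m) :
    hsymm σ R m ∈ I := by
  induction m using Nat.strong_induction_on with
  | _ m ih =>
    rcases le_or_gt m (Fintype.card σ) with hle | hgt
    · exact hI m hm hle
    have hrel := sum_antidiagonal_coeff_prodOneSubXT_mul_hsymm (σ := σ) (R := R) hm.ne'
    rw [Nat.sum_antidiagonal_eq_sum_range_succ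
        (fun a b => (prodOneSubXT σ R).coeff a * hsymm σ R b),
      sum_range_succ', coeff_prodOneSubXT_zero, one_mul, Nat.sub_zero] at hrel
    rw [eq_neg_of_add_eq_zero_right hrel]
    refine neg_mem (sum_mem fun k hk => ?_)
    rw [mem_range] at hk
    rcases Nat.lt_or_ge k (m - 1) with hk' | hk'
    · exact I.mul_mem_left _ (ih _ (by omega) (by omega))
    · rw [Polynomial.coeff_eq_zero_of_natDegree_lt (natDegree_prodOneSubXT_le.trans_lt (by omega)),
        zero_mul]
      exact I.zero_mem

theorem sum_piAntidiag_succ_mul_prod_X_pow (i : σ) (j : ℕ) :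
    ∑ c ∈ piAntidiag univ j, ((c i + 1 : ℕ) : MvPolynomial σ R) * ∏ t, X t ^ c t =
      ∑ p ∈ antidiagonal j, X i ^ p.1 * hsymm σ R p.2 := by
  have hseries : ∏ t, (if t = i then geomSeries (X t) ^ 2 else geomSeries (X t)) =
      geomSeries (X i) * ∏ t, geomSeries (X t : MvPolynomial σ R) := by
    have (t : σ) : (if t = i then geomSeries (X t) ^ 2 else geomSeries (X t)) =
        (if t = i then geomSeries (X t) else 1) * geomSeries (X t : MvPolynomial σ R) := by
      split_ifs <;> simp [pow_two]
    simp_rw [this, prod_mul_distrib, prod_ite_eq', if_pos (mem_univ i)]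
  have hcoeff (c : σ → ℕ) (t : σ) :
      PowerSeries.coeff (c t) (if t = i then geomSeries (X t) ^ 2 else geomSeries (X t)) =
        (if t = i then ((c i + 1 : ℕ) : MvPolynomial σ R) else 1) * X t ^ c t := by
    split_ifs with h <;> simp [h, PowerSeries.coeff_geomSeries_sq]
  have hcoeffj := congrArg (PowerSeries.coeff j) hseries
  rw [PowerSeries.coeff_mul, PowerSeries.coeff_prod_univ] at hcoeffj
  simpa only [hcoeff, prod_mul_distrib, prod_ite_eq', if_pos (mem_univ i),
    PowerSeries.coeff_geomSeries, coeff_prod_geomSeries_X] using hcoeffj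

end MvPolynomial

theorem hsym_eq_hsymm (n a : ℕ) : hsym n a = MvPolynomial.hsymm (Fin n) ℤ a := by
  rw [hsym, MvPolynomial.hsymm, Finset.sym_univ]
  rfl

theorem gtldPow_eq_sum_antidiagonal (n : ℕ) (i : Fin n) (j : ℕ) :
    gtldPow n i j = ∑ p ∈ antidiagonal j, MvPolynomial.X i ^ p.1 * hsym n p.2 := by
  simp_rw [hsym_eq_hsymm, ← MvPolynomial.sum_piAntidiag_succ_mul_prod_X_pow,
    piAntidiag_univ_fin_eq_antidiagonalTuple, gtldPow]
  simp

theorem stmt13_general (n : ℕ) (i : Fin n) (j : ℕ) (hj : 1 ≤ j) :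
    Ideal.Quotient.mk
        (Ideal.span { p : MvPolynomial (Fin n) ℤ | ∃ m, 1 ≤ m ∧ m ≤ n + 1 ∧ p = hsym n m })
        (gtldPow n i j)
      = Ideal.Quotient.mk
        (Ideal.span { p : MvPolynomial (Fin n) ℤ | ∃ m, 1 ≤ m ∧ m ≤ n + 1 ∧ p = hsym n m })
        (MvPolynomial.X i ^ (j - 1) * ((∑ t : Fin n, MvPolynomial.X t) + MvPolynomial.X i)) := by
  set I := Ideal.span { p : MvPolynomial (Fin n) ℤ | ∃ m, 1 ≤ m ∧ m ≤ n + 1 ∧ p = hsym n m }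
  have hzero (m : ℕ) : Ideal.Quotient.mk I (hsym n (m + 1)) = 0 := by
    refine Ideal.Quotient.eq_zero_iff_mem.mpr ?_
    rw [hsym_eq_hsymm]
    refine MvPolynomial.hsymm_mem_of_forall_le_card I (fun k hk hkn => ?_) m.succ_pos
    rw [Fintype.card_fin] at hkn
    exact Ideal.subset_span ⟨k, hk, by omega, (hsym_eq_hsymm n k).symm⟩
  obtain ⟨k, rfl⟩ := Nat.exists_eq_add_of_le' hj
  have hsym_zero : hsym n 0 = 1 := by rw [hsym_eq_hsymm, MvPolynomial.hsymm_zero]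
  have hsym_one : ∑ t : Fin n, MvPolynomial.X t = hsym n 1 := by
    rw [hsym_eq_hsymm, MvPolynomial.hsymm_one]
  rw [gtldPow_eq_sum_antidiagonal, Nat.sum_antidiagonal_succ', hsym_one, hsym_zero]
  simp only [Nat.add_sub_cancel, map_add, map_mul, map_sum, map_pow, hzero, mul_zero,
    sum_const_zero, map_one]
  ring

theorem stmt13 (n : ℕ) (i : Fin n) (j : ℕ) (hn : 1 ≤ n) (hj : 1 ≤ j) :
    Ideal.Quotient.mk
        (Ideal.span { p : MvPolynomial (Fin n) ℤ | ∃ m, 1 ≤ m ∧ m ≤ n + 1 ∧ p = hsym n m })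
        (gtldPow n i j)
      = Ideal.Quotient.mk
        (Ideal.span { p : MvPolynomial (Fin n) ℤ | ∃ m, 1 ≤ m ∧ m ≤ n + 1 ∧ p = hsym n m })
        (MvPolynomial.X i ^ (j - 1) * ((∑ t : Fin n, MvPolynomial.X t) + MvPolynomial.X i)) :=
  stmt13_general n i j hj
end

section
/- For every n ≥ 1, the sequence of multinomial-type sums P_n := Σ (-1)^{L(a)} · n!/(a_1!···a_n!), summed over all tuples (a_1,...,a_n) of non-negative integers with a_1+...+a_n = n satisfying the condition that a_{k-1} = 0 implies a_k = 0 for 2 ≤ k ≤ n (i.e., zeros only occur at the trailing end), where L(a) is the number of non-zero entries of a, satisfies P_n = (-1)^n. -/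
/-!
Peeling off the first entry `j ≥ 1` of a tuple whose zeros are trailing leaves a tuple of the
same kind with sum `s - j`, and the multinomial coefficient factors as `C(s, j)` times that of
the tail. Hence the signed sum `S m s` over such tuples of length `m` and sum `s` satisfies
`S (m + 1) (s + 1) = -∑_{j ≥ 1} C(s + 1, j) S m (s + 1 - j)`, and `(-1) ^ s` solves this
recursion for `s ≤ m` because `∑_j C(n, j) (-1) ^ (n - j) = (1 - 1) ^ n = 0` for `n ≠ 0`.
-/

open Finset

theorem Finset.Nat.sum_antidiagonalTuple_succ {M : Type*} [AddCommMonoid M] (k n : ℕ)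
    (f : (Fin (k + 1) → ℕ) → M) :
    ∑ a ∈ antidiagonalTuple (k + 1) n, f a =
      ∑ p ∈ antidiagonal n, ∑ b ∈ antidiagonalTuple k p.2, f (Fin.cons p.1 b) := by
  rw [sum_sigma']
  refine sum_nbij' (fun a => ⟨(a 0, ∑ i, Fin.tail a i), Fin.tail a⟩)
    (fun x => Fin.cons x.1.1 x.2) ?_ ?_ (fun a _ => Fin.cons_self_tail a) ?_ (fun a _ => by simp)
  all_goals
    simp only [mem_sigma, Nat.mem_antidiagonalTuple, HasAntidiagonal.mem_antidiagonal]
  · intro a ha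
    simp [← ha, Fin.sum_univ_succ, Fin.tail]
  · rintro ⟨⟨i, j⟩, b⟩ ⟨hij, hb⟩
    simpa [Fin.sum_univ_succ, hb] using hij
  · rintro ⟨⟨i, j⟩, b⟩ ⟨-, hb⟩
    simp [hb]

theorem Finset.Nat.fst_ne_zero_of_mem_antidiagonal_erase {n : ℕ} {p : ℕ × ℕ}
    (hp : p ∈ (antidiagonal n).erase (0, n)) : p.1 ≠ 0 := by
  obtain ⟨hp0, hp⟩ := mem_erase.1 hp
  rw [HasAntidiagonal.mem_antidiagonal] at hp
  exact fun h => hp0 (Prod.ext h (by simp_all))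

theorem Finset.Nat.sum_antidiagonal_choose_mul_neg_one_pow {n : ℕ} (hn : n ≠ 0) :
    ∑ p ∈ antidiagonal n, (n.choose p.1 : ℤ) * (-1) ^ p.2 = 0 := by
  have := (Commute.all (1 : ℤ) (-1)).add_pow' n
  simp only [add_neg_cancel, zero_pow hn, one_pow, one_mul, nsmul_eq_mul] at this
  exact this.symm

theorem Nat.multinomial_univ_cons {m : ℕ} (j : ℕ) (b : Fin m → ℕ) :
    Nat.multinomial univ (Fin.cons j b : Fin (m + 1) → ℕ) =
      (j + ∑ i, b i).choose j * Nat.multinomial univ b := by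
  rw [Fin.univ_succ, Nat.multinomial_cons]
  simp [Nat.multinomial]

theorem Fin.card_filter_cons_ne_zero {m j : ℕ} (hj : j ≠ 0) (b : Fin m → ℕ) :
    #{i | (Fin.cons j b : Fin (m + 1) → ℕ) i ≠ 0} = #{i | b i ≠ 0} + 1 := by
  simp [Fin.card_filter_univ_succ, hj]

def ZerosTrailing {m : ℕ} (a : Fin m → ℕ) : Prop :=
  ∀ k : Fin m, ∀ h : (k : ℕ) + 1 < m, a k = 0 → a ⟨(k : ℕ) + 1, h⟩ = 0

instance {m : ℕ} : DecidablePred (ZerosTrailing (m := m)) := fun a =>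
  inferInstanceAs
    (Decidable (∀ k : Fin m, ∀ h : (k : ℕ) + 1 < m, a k = 0 → a ⟨(k : ℕ) + 1, h⟩ = 0))

theorem zerosTrailing_zero {m : ℕ} : ZerosTrailing (0 : Fin m → ℕ) :=
  fun _ _ _ => rfl

theorem ZerosTrailing.eq_zero_of_head_eq_zero {m : ℕ} {a : Fin (m + 1) → ℕ}
    (ha : ZerosTrailing a) (h0 : a 0 = 0) : a = 0 := by
  have : ∀ i (hi : i < m + 1), a ⟨i, hi⟩ = 0 := by
    intro i
    induction i with
    | zero => exact fun _ => h0
    | succ i ih => exact fun hi => ha ⟨i, by omega⟩ hi (ih (by omega))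
  exact funext fun i => this i i.isLt

theorem zerosTrailing_cons_iff {m j : ℕ} (hj : j ≠ 0) (b : Fin m → ℕ) :
    ZerosTrailing (Fin.cons j b : Fin (m + 1) → ℕ) ↔ ZerosTrailing b := by
  constructor
  · intro h k hk hbk
    exact h k.succ (by simpa using hk) (by simpa using hbk)
  · intro h k hk
    induction k using Fin.cases with
    | zero => simp [hj]
    | succ k =>
      have hk' : (k : ℕ) + 1 < m := by simpa using hk
      have hsucc : (⟨(k.succ : ℕ) + 1, hk⟩ : Fin (m + 1)) = Fin.succ ⟨(k : ℕ) + 1, hk'⟩ := rfl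
      rw [Fin.cons_succ, hsucc, Fin.cons_succ]
      exact h k hk'

def signedMultinomial {m : ℕ} (a : Fin m → ℕ) : ℤ :=
  (-1) ^ #{i | a i ≠ 0} * Nat.multinomial univ a

theorem signedMultinomial_cons {m j : ℕ} (hj : j ≠ 0) (b : Fin m → ℕ) :
    signedMultinomial (Fin.cons j b : Fin (m + 1) → ℕ) =
      -((j + ∑ i, b i).choose j : ℤ) * signedMultinomial b := by
  rw [signedMultinomial, signedMultinomial, Fin.card_filter_cons_ne_zero hj,
    Nat.multinomial_univ_cons]
  push_cast
  ring

def signedMultinomialSum (m s : ℕ) : ℤ :=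
  ∑ a ∈ Nat.antidiagonalTuple m s with ZerosTrailing a, signedMultinomial a

theorem signedMultinomialSum_succ_succ (m s : ℕ) :
    signedMultinomialSum (m + 1) (s + 1) =
      -∑ p ∈ (antidiagonal (s + 1)).erase (0, s + 1),
        ((s + 1).choose p.1 : ℤ) * signedMultinomialSum m p.2 := by
  have head_zero : ∑ b ∈ Nat.antidiagonalTuple m (s + 1),
      (if ZerosTrailing (Fin.cons 0 b : Fin (m + 1) → ℕ)
        then signedMultinomial (Fin.cons 0 b : Fin (m + 1) → ℕ) else 0) = 0 := by
    refine sum_eq_zero fun b hb => if_neg fun hz => ?_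
    have hb0 : b = 0 := funext fun i => by
      simpa using congrFun (hz.eq_zero_of_head_eq_zero rfl) i.succ
    simp [hb0, Nat.mem_antidiagonalTuple] at hb
  rw [signedMultinomialSum, sum_filter, Nat.sum_antidiagonalTuple_succ,
    ← add_sum_erase _ _ (show (0, s + 1) ∈ antidiagonal (s + 1) by simp), head_zero, zero_add,
    ← sum_neg_distrib]
  refine sum_congr rfl fun p hp => ?_
  have hp1 := Nat.fst_ne_zero_of_mem_antidiagonal_erase hp
  have hp : p.1 + p.2 = s + 1 := mem_antidiagonal.1 (mem_of_mem_erase hp)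
  rw [signedMultinomialSum, sum_filter, mul_sum, ← sum_neg_distrib]
  refine sum_congr rfl fun b hb => ?_
  rw [Nat.mem_antidiagonalTuple] at hb
  simp only [zerosTrailing_cons_iff hp1, signedMultinomial_cons hp1, hb, hp]
  split_ifs <;> ring

theorem signedMultinomialSum_eq_neg_one_pow {m s : ℕ} (h : s ≤ m) :
    signedMultinomialSum m s = (-1) ^ s := by
  induction s using Nat.strong_induction_on generalizing m with
  | _ s ih =>
  match s, m with
  | 0, m =>
    rw [signedMultinomialSum, Nat.antidiagonalTuple_zero_right, filter_singleton,
      if_pos zerosTrailing_zero, sum_singleton]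
    simp [signedMultinomial, Nat.multinomial]
  | s + 1, 0 => omega
  | s + 1, m + 1 =>
    have hsum : ∑ p ∈ (antidiagonal (s + 1)).erase (0, s + 1),
        ((s + 1).choose p.1 : ℤ) * signedMultinomialSum m p.2 = -(-1) ^ (s + 1) := by
      rw [sum_congr rfl fun p hp => ?_, sum_erase_eq_sub (by simp),
        Nat.sum_antidiagonal_choose_mul_neg_one_pow (by omega)]
      · simp
      have hp1 := Nat.fst_ne_zero_of_mem_antidiagonal_erase hp
      have hp : p.1 + p.2 = s + 1 := mem_antidiagonal.1 (mem_of_mem_erase hp)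
      rw [ih p.2 (by omega) (by omega)]
    rw [signedMultinomialSum_succ_succ, hsum, neg_neg]

theorem stmt14_general (n : ℕ) :
    ∑ a ∈ (Finset.Nat.antidiagonalTuple n n).filter
        (fun a => ∀ k : Fin n, ∀ h : (k : ℕ) + 1 < n, a k = 0 → a ⟨(k : ℕ) + 1, h⟩ = 0),
      (-1 : ℤ) ^ ((Finset.univ.filter fun i : Fin n => a i ≠ 0).card) *
        ((n.factorial / ∏ i : Fin n, (a i).factorial : ℕ) : ℤ)
      = (-1 : ℤ) ^ n := by
  rw [← signedMultinomialSum_eq_neg_one_pow le_rfl]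
  refine sum_congr rfl fun a ha => ?_
  rw [signedMultinomial, Nat.multinomial, Nat.mem_antidiagonalTuple.1 (mem_filter.1 ha).1]

theorem stmt14 (n : ℕ) (hn : 1 ≤ n) :
    ∑ a ∈ (Finset.Nat.antidiagonalTuple n n).filter
        (fun a => ∀ k : Fin n, ∀ h : (k : ℕ) + 1 < n, a k = 0 → a ⟨(k : ℕ) + 1, h⟩ = 0),
      (-1 : ℤ) ^ ((Finset.univ.filter fun i : Fin n => a i ≠ 0).card) *
        ((n.factorial / ∏ i : Fin n, (a i).factorial : ℕ) : ℤ)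
      = (-1 : ℤ) ^ n :=
  stmt14_general n
end

section
/- Over Z, the set G = {Φ(1,1), Φ(2,2), ..., Φ(n,n)} in Z[x_1,...,x_n], where Φ(k,k) is the sum of all monomials of degree k in x_1,...,x_{n-k+1}, has the property that the leading monomial of Φ(k,k) with respect to the lexicographic order with x_1 < x_2 < ... < x_n is x_{n-k+1}^k, and these leading monomials are pairwise coprime. -/
/-- `Φ(k, k)`: the sum of all monomials of degree `k` in the variables
`x_1, …, x_{n-k+1}` of `ℤ[x_1, …, x_n]`. -/
noncomputable def PhiD (n k : ℕ) : MvPolynomial (Fin n) ℤ :=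
  ∑ m ∈ (Finset.univ.filter fun i : Fin n => (i : ℕ) < n - k + 1).sym k,
    ((m : Multiset (Fin n)).map MvPolynomial.X).prod

/-!
The product `(m.map X).prod` over a multiset `m` of variables is the monomial with exponent
vector `count · m`, and distinct multisets give distinct monomials, so `Φ(k,k)` is the sum,
with coefficient one each, of the monomials of degree `k` whose variables all lie in
`x_1, …, x_{n-k+1}`. Among these, `x_{n-k+1}^k` is lex-largest: every other one involves no variable
above `x_{n-k+1}` and has `x_{n-k+1}`-degree `< k`. The leading monomials `x_{n-k+1}^k` for
distinct `k` are powers of distinct variables, hence coprime.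
-/

open MvPolynomial

theorem Multiset.toFinsupp_replicate {α : Type*} [DecidableEq α] (n : ℕ) (a : α) :
    toFinsupp (replicate n a) = Finsupp.single a n := by
  ext b
  simp [count_replicate, Finsupp.single_apply]

theorem Multiset.toFinsupp_lt_single_card_of_forall_le {α : Type*} [LinearOrder α]
    {m : Multiset α} {i : α} (hm : ∀ x ∈ m, x ≤ i)
    (hne : toFinsupp m ≠ Finsupp.single i (card m)) :
    toFinsupp m i < card m ∧ ∀ j, i < j → toFinsupp m j = Finsupp.single i (card m) j := by
  refine ⟨lt_of_le_of_ne (count_le_card i m) fun hcount => hne ?_, fun j hij => ?_⟩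
  · rw [eq_replicate_card.mpr fun x hx => (count_eq_card.mp hcount x hx).symm, card_replicate,
      toFinsupp_replicate]
  · rw [toFinsupp_apply, count_eq_zero.mpr fun hj => (hm j hj).not_gt hij,
      Finsupp.single_eq_of_ne hij.ne']

namespace MvPolynomial

variable {R σ : Type*} [CommSemiring R] [DecidableEq σ]

theorem prod_map_X_eq_monomial (m : Multiset σ) :
    (m.map X).prod = (monomial (Multiset.toFinsupp m) 1 : MvPolynomial σ R) := by
  induction m using Multiset.induction with
  | empty => simp
  | cons a m ih =>
    rw [Multiset.map_cons, Multiset.prod_cons, ih, X, monomial_mul, one_mul,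
      ← Multiset.singleton_add, Multiset.toFinsupp_add, Multiset.toFinsupp_singleton]

variable (s : Finset σ) (k : ℕ)

theorem coeff_sum_sym_prod_map_X {m : Sym σ k} (hm : m ∈ s.sym k) :
    coeff (Multiset.toFinsupp m)
      (∑ m ∈ s.sym k, ((m : Multiset σ).map X).prod : MvPolynomial σ R) = 1 := by
  simp_rw [prod_map_X_eq_monomial, coeff_sum, coeff_monomial]
  rw [Finset.sum_eq_single_of_mem m hm, if_pos rfl]
  intro m' _ hne
  exact if_neg fun h => hne (Sym.coe_injective (Multiset.toFinsupp.injective h))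

theorem exists_sym_of_mem_support_sum_sym_prod_map_X {e : σ →₀ ℕ}
    (he : e ∈ (∑ m ∈ s.sym k, ((m : Multiset σ).map X).prod : MvPolynomial σ R).support) :
    ∃ m ∈ s.sym k, Multiset.toFinsupp (m : Multiset σ) = e := by
  simp_rw [prod_map_X_eq_monomial] at he
  obtain ⟨m, hm, he⟩ := Finset.mem_biUnion.mp (support_sum he)
  exact ⟨m, hm, (Finset.mem_singleton.mp (support_monomial_subset he)).symm⟩

end MvPolynomial

theorem stmt19 (n : ℕ) :
    (∀ k, ∀ hk : 1 ≤ k, ∀ hkn : k ≤ n,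
      -- the monomial x_{n-k+1}^k occurs in Φ(k,k) with coefficient 1 …
      MvPolynomial.coeff (Finsupp.single (⟨n - k, by omega⟩ : Fin n) k) (PhiD n k) = 1
      -- … and it is the lex-leading monomial (x_1 < x_2 < ⋯ < x_n, so the most
      -- significant variable is x_n): every other exponent vector in the support
      -- is lex-smaller.
      ∧ ∀ e ∈ (PhiD n k).support, e ≠ Finsupp.single (⟨n - k, by omega⟩ : Fin n) k →
          ∃ i : Fin n, e i < (Finsupp.single (⟨n - k, by omega⟩ : Fin n) k : Fin n →₀ ℕ) i ∧
            ∀ j : Fin n, i < j →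
              e j = (Finsupp.single (⟨n - k, by omega⟩ : Fin n) k : Fin n →₀ ℕ) j)
    ∧
    -- the leading monomials are pairwise coprime: their variable supports are disjoint
    (∀ k k', ∀ hk : 1 ≤ k, ∀ hkn : k ≤ n, ∀ hk' : 1 ≤ k', ∀ hk'n : k' ≤ n, k ≠ k' →
      Disjoint (Finsupp.single (⟨n - k, by omega⟩ : Fin n) k : Fin n →₀ ℕ).support
        (Finsupp.single (⟨n - k', by omega⟩ : Fin n) k' : Fin n →₀ ℕ).support) := by
  refine ⟨fun k hk hkn => ?_, fun k k' hk hkn hk' hk'n hne => ?_⟩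
  · set i : Fin n := ⟨n - k, by omega⟩
    set S := Finset.univ.filter fun j : Fin n => (j : ℕ) < n - k + 1
    have hS : ∀ m ∈ S.sym k, ∀ x ∈ (m : Multiset (Fin n)), x ≤ i := fun m hm x hx => by
      have hxS := Finset.mem_filter.mp (Finset.mem_sym_iff.mp hm x hx)
      exact Fin.le_def.mpr (by simp only [i]; omega)
    have hrep : Sym.replicate k i ∈ S.sym k :=
      Finset.mem_sym_iff.mpr fun x hx => by
        rw [(Sym.mem_replicate.mp hx).2]; simp [S, i]
    refine ⟨?_, fun e he hne => ?_⟩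
    · rw [← Multiset.toFinsupp_replicate]
      exact coeff_sum_sym_prod_map_X S k hrep
    · obtain ⟨m, hm, rfl⟩ := exists_sym_of_mem_support_sum_sym_prod_map_X S k he
      have hlex := Multiset.toFinsupp_lt_single_card_of_forall_le (hS m hm)
      rw [Sym.card_coe] at hlex
      exact ⟨i, by simpa using (hlex hne).1, (hlex hne).2⟩
  · rw [Finsupp.support_single _ (by omega), Finsupp.support_single _ (by omega),
      Finset.disjoint_singleton]
    intro h
    have := congrArg Fin.val h
    simp only at this
    omega
end
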